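/- arXiv:2403.02048 — 4 statements merged into one kernel-verified Lean document; each statement's English description precedes it below -/
import Mathlib

section
/- Let p, q > 1 with β = max{p,q}, let (u,v) ∈ ℝ² with (u,v) ≠ (0,0), and let F : ℝ² → ℝ be twice continuously differentiable satisfying: F_{ts}(t,s)·t·s ≥ 0 and 0 < (β-1)(F_t(t,s)·t + F_s(t,s)·s) < F_{tt}(t,s)·t² + F_{ss}(t,s)·s² for all (t,s) ≠ (0,0). Then the function A(τ) = (1/p)·F_t(τu, τv)·τu + (1/p)·F_s(τu, τv)·τv − F(τu, τv) is strictly increasing on (0, +∞). -/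
/-!
With `f = uncurry F` and `x = τ • (u, v)`, the function is `A τ = (1/p) f' x x - f x`, and
`τ A' τ = (1/p) (f'' x x x - (p - 1) f' x x)`. In coordinates `f'' x x x` is
`F_tt t² + 2 F_ts t s + F_ss s²` (the mixed partials agree since `f` is `C²`), which dominates
`F_tt t² + F_ss s² > (p - 1) (F_t t + F_s s) = (p - 1) f' x x`, so `A' > 0` on `(0, ∞)`.
-/

open Set Function

section Partials

variable {𝕜 G : Type*} [NontriviallyNormedField 𝕜] [NormedAddCommGroup G] [NormedSpace 𝕜 G]

theorem HasFDerivAt.hasDerivAt_prodMk_left {g : 𝕜 × 𝕜 → G} {g' : 𝕜 × 𝕜 →L[𝕜] G} {t s : 𝕜}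
    (hg : HasFDerivAt g g' (t, s)) : HasDerivAt (fun t' => g (t', s)) (g' (1, 0)) t :=
  hg.comp_hasDerivAt t ((hasDerivAt_id t).prodMk (hasDerivAt_const t s))

theorem HasFDerivAt.hasDerivAt_prodMk_right {g : 𝕜 × 𝕜 → G} {g' : 𝕜 × 𝕜 →L[𝕜] G} {t s : 𝕜}
    (hg : HasFDerivAt g g' (t, s)) : HasDerivAt (fun s' => g (t, s')) (g' (0, 1)) s :=
  hg.comp_hasDerivAt s ((hasDerivAt_const s t).prodMk (hasDerivAt_id s))

theorem ContinuousLinearMap.apply_prodMk {M : Type*} [AddCommGroup M] [Module 𝕜 M]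
    [TopologicalSpace M] (L : 𝕜 × 𝕜 →L[𝕜] M) (t s : 𝕜) :
    L (t, s) = t • L (1, 0) + s • L (0, 1) := by
  rw [← map_smul, ← map_smul, ← map_add]
  simp

variable {F : 𝕜 → 𝕜 → G} {t s : 𝕜}

theorem deriv_partial_fst (hF : DifferentiableAt 𝕜 (uncurry F) (t, s)) :
    deriv (fun t' => F t' s) t = fderiv 𝕜 (uncurry F) (t, s) (1, 0) :=
  hF.hasFDerivAt.hasDerivAt_prodMk_left.deriv

theorem deriv_partial_snd (hF : DifferentiableAt 𝕜 (uncurry F) (t, s)) :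
    deriv (fun s' => F t s') s = fderiv 𝕜 (uncurry F) (t, s) (0, 1) :=
  hF.hasFDerivAt.hasDerivAt_prodMk_right.deriv

theorem deriv_partial_fst_fst (hF : Differentiable 𝕜 (uncurry F))
    (hF' : DifferentiableAt 𝕜 (fderiv 𝕜 (uncurry F)) (t, s)) :
    deriv (fun t' => deriv (fun t'' => F t'' s) t') t =
      fderiv 𝕜 (fderiv 𝕜 (uncurry F)) (t, s) (1, 0) (1, 0) := by
  simp_rw [deriv_partial_fst (hF _)]
  simpa using (hF'.hasFDerivAt.hasDerivAt_prodMk_left.clm_apply (hasDerivAt_const t _)).deriv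

theorem deriv_partial_snd_snd (hF : Differentiable 𝕜 (uncurry F))
    (hF' : DifferentiableAt 𝕜 (fderiv 𝕜 (uncurry F)) (t, s)) :
    deriv (fun s' => deriv (fun s'' => F t s'') s') s =
      fderiv 𝕜 (fderiv 𝕜 (uncurry F)) (t, s) (0, 1) (0, 1) := by
  simp_rw [deriv_partial_snd (hF _)]
  simpa using (hF'.hasFDerivAt.hasDerivAt_prodMk_right.clm_apply (hasDerivAt_const s _)).deriv

theorem deriv_partial_fst_snd (hF : Differentiable 𝕜 (uncurry F))
    (hF' : DifferentiableAt 𝕜 (fderiv 𝕜 (uncurry F)) (t, s)) :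
    deriv (fun s' => deriv (fun t' => F t' s') t) s =
      fderiv 𝕜 (fderiv 𝕜 (uncurry F)) (t, s) (0, 1) (1, 0) := by
  simp_rw [deriv_partial_fst (hF _)]
  simpa using (hF'.hasFDerivAt.hasDerivAt_prodMk_right.clm_apply (hasDerivAt_const s _)).deriv

theorem fderiv_uncurry_apply_self {F : 𝕜 → 𝕜 → 𝕜} (hF : DifferentiableAt 𝕜 (uncurry F) (t, s)) :
    fderiv 𝕜 (uncurry F) (t, s) (t, s) =
      deriv (fun t' => F t' s) t * t + deriv (fun s' => F t s') s * s := by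
  rw [ContinuousLinearMap.apply_prodMk, deriv_partial_fst hF, deriv_partial_snd hF, smul_eq_mul,
    smul_eq_mul, mul_comm t, mul_comm s]

end Partials

theorem fderiv_fderiv_uncurry_apply_self {F : ℝ → ℝ → ℝ} (hF : ContDiff ℝ 2 (uncurry F)) (t s : ℝ) :
    fderiv ℝ (fderiv ℝ (uncurry F)) (t, s) (t, s) (t, s) =
      deriv (fun t' => deriv (fun t'' => F t'' s) t') t * t ^ 2 +
        2 * (deriv (fun s' => deriv (fun t' => F t' s') t) s * t * s) +
          deriv (fun s' => deriv (fun s'' => F t s'') s') s * s ^ 2 := by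
  have hf : Differentiable ℝ (uncurry F) := hF.differentiable (by norm_num)
  have hf' : DifferentiableAt ℝ (fderiv ℝ (uncurry F)) (t, s) :=
    (hF.fderiv_right (m := 1) (by norm_num)).differentiable (by norm_num) _
  have hsymm := hF.contDiffAt.isSymmSndFDerivAt (x := (t, s)) (by simp)
  rw [deriv_partial_fst_fst hf hf', deriv_partial_fst_snd hf hf', deriv_partial_snd_snd hf hf',
    ContinuousLinearMap.apply_prodMk (fderiv ℝ _ _) t s]
  simp only [add_apply, smul_apply, smul_eq_mul]
  rw [ContinuousLinearMap.apply_prodMk (fderiv ℝ _ _ (1, 0)),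
    ContinuousLinearMap.apply_prodMk (fderiv ℝ _ _ (0, 1)), hsymm (1, 0) (0, 1), smul_eq_mul,
    smul_eq_mul, smul_eq_mul, smul_eq_mul]
  ring

theorem strictMonoOn_radial_of_euler_lt {E : Type*} [NormedAddCommGroup E] [NormedSpace ℝ E]
    {f : E → ℝ} {p : ℝ} (hp : 0 < p) (hf : Differentiable ℝ f)
    (hf' : Differentiable ℝ (fderiv ℝ f)) {w : E} (hw : w ≠ 0)
    (h : ∀ x ≠ 0, (p - 1) * fderiv ℝ f x x < fderiv ℝ (fderiv ℝ f) x x x) :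
    StrictMonoOn (fun τ : ℝ => 1 / p * fderiv ℝ f (τ • w) (τ • w) - f (τ • w)) (Ioi 0) := by
  have hray : ∀ τ : ℝ, HasDerivAt (fun τ : ℝ => τ • w) w τ := fun τ => by
    simpa using (hasDerivAt_id τ).smul_const w
  have hA : ∀ τ : ℝ, HasDerivAt (fun τ : ℝ => 1 / p * fderiv ℝ f (τ • w) (τ • w) - f (τ • w))
      (1 / p * (fderiv ℝ (fderiv ℝ f) (τ • w) w (τ • w) + fderiv ℝ f (τ • w) w) -
        fderiv ℝ f (τ • w) w) τ := fun τ =>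
    ((((hf' _).hasFDerivAt.comp_hasDerivAt τ (hray τ)).clm_apply (hray τ)).const_mul (1 / p)).sub
      ((hf _).hasFDerivAt.comp_hasDerivAt τ (hray τ))
  refine strictMonoOn_of_deriv_pos (convex_Ioi 0)
    (fun τ _ => (hA τ).continuousAt.continuousWithinAt) fun τ hτ => ?_
  rw [interior_Ioi, mem_Ioi] at hτ
  have hx : τ • w ≠ 0 := smul_ne_zero hτ.ne' hw
  have hτ_deriv : τ * deriv (fun τ : ℝ => 1 / p * fderiv ℝ f (τ • w) (τ • w) - f (τ • w)) τ =
      1 / p * (fderiv ℝ (fderiv ℝ f) (τ • w) (τ • w) (τ • w) -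
        (p - 1) * fderiv ℝ f (τ • w) (τ • w)) := by
    rw [(hA τ).deriv]
    simp only [map_smul, smul_apply, smul_eq_mul]
    field_simp
    ring
  have hpos : 0 < τ * deriv (fun τ : ℝ => 1 / p * fderiv ℝ f (τ • w) (τ • w) - f (τ • w)) τ := by
    rw [hτ_deriv]
    exact mul_pos (by positivity) (by linarith [h _ hx])
  exact pos_of_mul_pos_right hpos hτ.le

theorem stmt_6_general (p q : ℝ) (hp : 1 < p) (hqp : q ≤ p)
    (u v : ℝ) (huv : (u, v) ≠ (0, 0)) (F : ℝ → ℝ → ℝ)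
    (hF : ContDiff ℝ 2 (Function.uncurry F))
    (hFts : ∀ t s : ℝ,
      deriv (fun s' => deriv (fun t' => F t' s') t) s * t * s ≥ 0)
    (hF4 : ∀ t s : ℝ, (t, s) ≠ (0, 0) →
      0 < (max p q - 1) *
          (deriv (fun t' => F t' s) t * t + deriv (fun s' => F t s') s * s) ∧
        (max p q - 1) *
            (deriv (fun t' => F t' s) t * t + deriv (fun s' => F t s') s * s) <
          deriv (fun t' => deriv (fun t'' => F t'' s) t') t * t ^ 2 +
            deriv (fun s' => deriv (fun s'' => F t s'') s') s * s ^ 2) :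
    StrictMonoOn (fun τ =>
      1 / p * deriv (fun t' => F t' (τ * v)) (τ * u) * (τ * u) +
        1 / p * deriv (fun s' => F (τ * u) s') (τ * v) * (τ * v) -
          F (τ * u) (τ * v)) (Set.Ioi (0 : ℝ)) := by
  have hf : Differentiable ℝ (uncurry F) := hF.differentiable (by norm_num)
  have hf' : Differentiable ℝ (fderiv ℝ (uncurry F)) :=
    (hF.fderiv_right (m := 1) (by norm_num)).differentiable (by norm_num)
  have hA : (fun τ =>
      1 / p * deriv (fun t' => F t' (τ * v)) (τ * u) * (τ * u) +
        1 / p * deriv (fun s' => F (τ * u) s') (τ * v) * (τ * v) - F (τ * u) (τ * v)) =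
      fun τ : ℝ => 1 / p * fderiv ℝ (uncurry F) (τ • (u, v)) (τ • (u, v)) -
        uncurry F (τ • (u, v)) := by
    funext τ
    simp only [Prod.smul_mk, smul_eq_mul, fderiv_uncurry_apply_self (hf _), uncurry_apply_pair]
    ring
  rw [hA]
  refine strictMonoOn_radial_of_euler_lt (by linarith) hf hf' huv fun ⟨t, s⟩ hts => ?_
  have hpartials := (hF4 t s hts).2
  rw [max_eq_left hqp] at hpartials
  rw [fderiv_uncurry_apply_self (hf _), fderiv_fderiv_uncurry_apply_self hF]
  linarith [hFts t s]

theorem stmt_6 (p q : ℝ) (hp : 1 < p) (hq : 1 < q) (hqp : q ≤ p)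
    (u v : ℝ) (huv : (u, v) ≠ (0, 0)) (F : ℝ → ℝ → ℝ)
    (hF : ContDiff ℝ 2 (Function.uncurry F))
    (hFts : ∀ t s : ℝ,
      deriv (fun s' => deriv (fun t' => F t' s') t) s * t * s ≥ 0)
    (hF4 : ∀ t s : ℝ, (t, s) ≠ (0, 0) →
      0 < (max p q - 1) *
          (deriv (fun t' => F t' s) t * t + deriv (fun s' => F t s') s * s) ∧
        (max p q - 1) *
            (deriv (fun t' => F t' s) t * t + deriv (fun s' => F t s') s * s) <
          deriv (fun t' => deriv (fun t'' => F t'' s) t') t * t ^ 2 +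
            deriv (fun s' => deriv (fun s'' => F t s'') s') s * s ^ 2) :
    StrictMonoOn (fun τ =>
      1 / p * deriv (fun t' => F t' (τ * v)) (τ * u) * (τ * u) +
        1 / p * deriv (fun s' => F (τ * u) s') (τ * v) * (τ * v) -
          F (τ * u) (τ * v)) (Set.Ioi (0 : ℝ)) :=
  stmt_6_general p q hp hqp u v huv F hF hFts hF4
end

section
/- Let p, q > 1 with p ≥ q (so β = p), let (u,v) ∈ ℝ², (u,v) ≠ (0,0), and let F : ℝ² → ℝ be twice continuously differentiable satisfying F_{ts}(t,s)·t·s ≥ 0 and (β-1)(F_t(t,s)·t + F_s(t,s)·s) < F_{tt}(t,s)·t² + F_{ss}(t,s)·s² for all (t,s) ≠ (0,0). Then the function H(t) = t^{1-p}·(F_t(tu, tv)·u + F_s(tu, tv)·v) − t^{q-p}·c is strictly increasing on (0, +∞) for any constant c ≥ 0 in the case v = 0 or general (u,v) ≠ (0,0). -/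
/-!
Write `f = uncurry F`, `w = (u, v)` and `φ t = Df(t • w) w`, so that `H t = t^(1-p) φ t - c t^(q-p)`
and `φ' t = D²f(t • w) w w`. With `z = t • w` one gets
`H' t = t^(-p-1) ((1 - p) Df(z) z + D²f(z) z z) + (p - q) c t^(q-p-1)`.
Expanding `D²f(z) z z` in partial derivatives, the mixed term `2 F_ts z₁ z₂` is nonnegative, so the
hypothesis on `F_tt z₁² + F_ss z₂²` makes the bracket positive; the last term is nonnegative as `q ≤ p`.
-/

open Set Function

lemma ContinuousLinearMap.apply_prod_eq_smul_add_smul {M : Type*} [AddCommMonoid M] [Module ℝ M]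
    [TopologicalSpace M] (L : ℝ × ℝ →L[ℝ] M) (a b : ℝ) :
    L (a, b) = a • L (1, 0) + b • L (0, 1) := by
  rw [← map_smul, ← map_smul, ← map_add]
  simp

lemma ContinuousLinearMap.apply_prod_eq_mul_add_mul (L : ℝ × ℝ →L[ℝ] ℝ) (a b : ℝ) :
    L (a, b) = L (1, 0) * a + L (0, 1) * b := by
  rw [L.apply_prod_eq_smul_add_smul, smul_eq_mul, smul_eq_mul, mul_comm a, mul_comm b]

section Slices

variable {E : Type*} [NormedAddCommGroup E] [NormedSpace ℝ E] {g : ℝ × ℝ → E}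

lemma hasDerivAt_slice_fst {t s : ℝ} (hg : DifferentiableAt ℝ g (t, s)) :
    HasDerivAt (fun t' => g (t', s)) (fderiv ℝ g (t, s) (1, 0)) t :=
  hg.hasFDerivAt.comp_hasDerivAt t ((hasDerivAt_id t).prodMk (hasDerivAt_const t s))

lemma hasDerivAt_slice_snd {t s : ℝ} (hg : DifferentiableAt ℝ g (t, s)) :
    HasDerivAt (fun s' => g (t, s')) (fderiv ℝ g (t, s) (0, 1)) s :=
  hg.hasFDerivAt.comp_hasDerivAt s ((hasDerivAt_const s t).prodMk (hasDerivAt_id s))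

lemma hasDerivAt_comp_smul {w : ℝ × ℝ} {t : ℝ} (hg : DifferentiableAt ℝ g (t • w)) :
    HasDerivAt (fun r : ℝ => g (r • w)) (fderiv ℝ g (t • w) w) t := by
  have h := hg.hasFDerivAt.comp_hasDerivAt t ((hasDerivAt_id' t).smul_const w)
  rwa [one_smul] at h

lemma HasDerivAt.clm_apply_const {G : Type*} [NormedAddCommGroup G] [NormedSpace ℝ G]
    {c : ℝ → E →L[ℝ] G} {c' : E →L[ℝ] G} {t : ℝ} (hc : HasDerivAt c c' t) (w : E) :
    HasDerivAt (fun r => c r w) (c' w) t := by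
  simpa using hc.clm_apply (hasDerivAt_const t w)

end Slices

section Partials

variable {F : ℝ → ℝ → ℝ}

lemma deriv_fst_eq_fderiv (hF : Differentiable ℝ (uncurry F)) (t s : ℝ) :
    deriv (fun t' => F t' s) t = fderiv ℝ (uncurry F) (t, s) (1, 0) :=
  (hasDerivAt_slice_fst (hF (t, s))).deriv

lemma deriv_snd_eq_fderiv (hF : Differentiable ℝ (uncurry F)) (t s : ℝ) :
    deriv (fun s' => F t s') s = fderiv ℝ (uncurry F) (t, s) (0, 1) :=
  (hasDerivAt_slice_snd (hF (t, s))).deriv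

lemma fderiv_apply_eq_deriv_fst_add_deriv_snd (hF : Differentiable ℝ (uncurry F)) (a b : ℝ) :
    fderiv ℝ (uncurry F) (a, b) (a, b) =
      deriv (fun t' => F t' b) a * a + deriv (fun s' => F a s') b * b := by
  rw [ContinuousLinearMap.apply_prod_eq_mul_add_mul, deriv_fst_eq_fderiv hF, deriv_snd_eq_fderiv hF]

variable (hF : ContDiff ℝ 2 (uncurry F))
include hF

lemma differentiable_fderiv : Differentiable ℝ (fderiv ℝ (uncurry F)) :=
  (hF.fderiv_right (m := 1) (by norm_num)).differentiable (by norm_num)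

lemma fderiv_fderiv_apply_comm (z v w : ℝ × ℝ) :
    fderiv ℝ (fderiv ℝ (uncurry F)) z v w = fderiv ℝ (fderiv ℝ (uncurry F)) z w v :=
  hF.contDiffAt.isSymmSndFDerivAt (by simp) v w

lemma hasDerivAt_fderiv_apply_comp_smul (w : ℝ × ℝ) (t : ℝ) :
    HasDerivAt (fun r : ℝ => fderiv ℝ (uncurry F) (r • w) w)
      (fderiv ℝ (fderiv ℝ (uncurry F)) (t • w) w w) t :=
  (hasDerivAt_comp_smul (differentiable_fderiv hF _)).clm_apply_const w

lemma deriv_deriv_fst_eq_fderiv_fderiv (t s : ℝ) :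
    deriv (fun t' => deriv (fun t'' => F t'' s) t') t =
      fderiv ℝ (fderiv ℝ (uncurry F)) (t, s) (1, 0) (1, 0) := by
  simp_rw [deriv_fst_eq_fderiv (hF.differentiable (by norm_num))]
  exact ((hasDerivAt_slice_fst (differentiable_fderiv hF _)).clm_apply_const _).deriv

lemma deriv_snd_deriv_fst_eq_fderiv_fderiv (t s : ℝ) :
    deriv (fun s' => deriv (fun t' => F t' s') t) s =
      fderiv ℝ (fderiv ℝ (uncurry F)) (t, s) (0, 1) (1, 0) := by
  simp_rw [deriv_fst_eq_fderiv (hF.differentiable (by norm_num))]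
  exact ((hasDerivAt_slice_snd (differentiable_fderiv hF _)).clm_apply_const _).deriv

lemma deriv_deriv_snd_eq_fderiv_fderiv (t s : ℝ) :
    deriv (fun s' => deriv (fun s'' => F t s'') s') s =
      fderiv ℝ (fderiv ℝ (uncurry F)) (t, s) (0, 1) (0, 1) := by
  simp_rw [deriv_snd_eq_fderiv (hF.differentiable (by norm_num))]
  exact ((hasDerivAt_slice_snd (differentiable_fderiv hF _)).clm_apply_const _).deriv

lemma fderiv_fderiv_apply_eq_second_partials (a b : ℝ) :
    fderiv ℝ (fderiv ℝ (uncurry F)) (a, b) (a, b) (a, b) =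
      deriv (fun t' => deriv (fun t'' => F t'' b) t') a * a ^ 2 +
        2 * deriv (fun s' => deriv (fun t' => F t' s') a) b * (a * b) +
        deriv (fun s' => deriv (fun s'' => F a s'') s') b * b ^ 2 := by
  rw [deriv_deriv_fst_eq_fderiv_fderiv hF, deriv_snd_deriv_fst_eq_fderiv_fderiv hF,
    deriv_deriv_snd_eq_fderiv_fderiv hF,
    (fderiv ℝ (fderiv ℝ (uncurry F)) (a, b)).apply_prod_eq_smul_add_smul a b]
  simp only [add_apply, smul_apply,
    ContinuousLinearMap.apply_prod_eq_mul_add_mul _ a b, smul_eq_mul]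
  rw [fderiv_fderiv_apply_comm hF _ (1, 0) (0, 1)]
  ring

end Partials

lemma strictMonoOn_rpow_mul_sub_rpow_mul {φ φ' : ℝ → ℝ} {p q c : ℝ} (hqp : q ≤ p) (hc : 0 ≤ c)
    (hφ : ∀ t > 0, HasDerivAt φ (φ' t) t)
    (hpos : ∀ t > 0, 0 < (1 - p) * (t * φ t) + t ^ 2 * φ' t) :
    StrictMonoOn (fun t => t ^ (1 - p) * φ t - t ^ (q - p) * c) (Ioi 0) := by
  have hderiv : ∀ t > 0, HasDerivAt (fun t => t ^ (1 - p) * φ t - t ^ (q - p) * c)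
      ((1 - p) * t ^ (1 - p - 1) * φ t + t ^ (1 - p) * φ' t - (q - p) * t ^ (q - p - 1) * c) t :=
    fun t ht => ((Real.hasDerivAt_rpow_const (Or.inl ht.ne')).mul (hφ t ht)).sub
      ((Real.hasDerivAt_rpow_const (Or.inl ht.ne')).mul_const c)
  refine strictMonoOn_of_hasDerivWithinAt_pos (convex_Ioi 0)
    (fun t ht => (hderiv t ht).continuousAt.continuousWithinAt)
    (fun t ht => (hderiv t (interior_subset ht)).hasDerivWithinAt) fun t ht => ?_
  rw [interior_Ioi] at ht
  have ht : 0 < t := ht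
  have h1 : t ^ (1 - p - 1) = t ^ (-p - 1) * t := by
    rw [← Real.rpow_add_one ht.ne']; ring_nf
  have h2 : t ^ (1 - p) = t ^ (-p - 1) * t ^ 2 := by
    rw [← Real.rpow_natCast, ← Real.rpow_add ht]; push_cast; ring_nf
  have hmain := mul_pos (Real.rpow_pos_of_pos ht (-p - 1)) (hpos t ht)
  have hc' : 0 ≤ (p - q) * t ^ (q - p - 1) * c :=
    mul_nonneg (mul_nonneg (sub_nonneg.mpr hqp) (Real.rpow_pos_of_pos ht _).le) hc
  rw [h1, h2]
  linear_combination hmain + hc'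

lemma sub_one_mul_fderiv_lt_fderiv_fderiv {F : ℝ → ℝ → ℝ} {p : ℝ} (hF : ContDiff ℝ 2 (uncurry F))
    (hFts : ∀ t s : ℝ, deriv (fun s' => deriv (fun t' => F t' s') t) s * t * s ≥ 0)
    (hF4 : ∀ t s : ℝ, (t, s) ≠ (0, 0) →
      (p - 1) * (deriv (fun t' => F t' s) t * t + deriv (fun s' => F t s') s * s) <
        deriv (fun t' => deriv (fun t'' => F t'' s) t') t * t ^ 2 +
          deriv (fun s' => deriv (fun s'' => F t s'') s') s * s ^ 2)
    {z : ℝ × ℝ} (hz : z ≠ 0) :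
    (p - 1) * fderiv ℝ (uncurry F) z z < fderiv ℝ (fderiv ℝ (uncurry F)) z z z := by
  obtain ⟨a, b⟩ := z
  rw [fderiv_apply_eq_deriv_fst_add_deriv_snd (hF.differentiable (by norm_num)),
    fderiv_fderiv_apply_eq_second_partials hF]
  linarith [hF4 a b hz, hFts a b]

theorem stmt_7_general (p q : ℝ) (hqp : q ≤ p)
    (u v c : ℝ) (hc : 0 ≤ c) (huv : (u, v) ≠ (0, 0)) (F : ℝ → ℝ → ℝ)
    (hF : ContDiff ℝ 2 (Function.uncurry F))
    (hFts : ∀ t s : ℝ,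
      deriv (fun s' => deriv (fun t' => F t' s') t) s * t * s ≥ 0)
    (hF4 : ∀ t s : ℝ, (t, s) ≠ (0, 0) →
      (p - 1) * (deriv (fun t' => F t' s) t * t + deriv (fun s' => F t s') s * s) <
        deriv (fun t' => deriv (fun t'' => F t'' s) t') t * t ^ 2 +
          deriv (fun s' => deriv (fun s'' => F t s'') s') s * s ^ 2) :
    StrictMonoOn (fun t =>
      t ^ (1 - p) * (deriv (fun t' => F t' (t * v)) (t * u) * u +
        deriv (fun s' => F (t * u) s') (t * v) * v) - t ^ (q - p) * c)
      (Set.Ioi (0 : ℝ)) := by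
  have hF1 : Differentiable ℝ (uncurry F) := hF.differentiable (by norm_num)
  have hH : (fun t : ℝ => t ^ (1 - p) * (deriv (fun t' => F t' (t * v)) (t * u) * u +
        deriv (fun s' => F (t * u) s') (t * v) * v) - t ^ (q - p) * c) =
      fun t => t ^ (1 - p) * fderiv ℝ (uncurry F) (t • (u, v)) (u, v) - t ^ (q - p) * c := by
    funext t
    rw [deriv_fst_eq_fderiv hF1, deriv_snd_eq_fderiv hF1,
      ← ContinuousLinearMap.apply_prod_eq_mul_add_mul]
    rfl
  rw [hH]
  refine strictMonoOn_rpow_mul_sub_rpow_mul hqp hc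
    (fun t _ => hasDerivAt_fderiv_apply_comp_smul hF (u, v) t) fun t ht => ?_
  have hz : t • (u, v) ≠ 0 := smul_ne_zero (ne_of_gt ht) huv
  have key := sub_one_mul_fderiv_lt_fderiv_fderiv hF hFts hF4 hz
  simp only [map_smul, smul_apply, smul_eq_mul] at key
  linear_combination key

theorem stmt_7 (p q : ℝ) (hp : 1 < p) (hq : 1 < q) (hqp : q ≤ p)
    (u v c : ℝ) (hc : 0 ≤ c) (huv : (u, v) ≠ (0, 0)) (F : ℝ → ℝ → ℝ)
    (hF : ContDiff ℝ 2 (Function.uncurry F))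
    (hFts : ∀ t s : ℝ,
      deriv (fun s' => deriv (fun t' => F t' s') t) s * t * s ≥ 0)
    (hF4 : ∀ t s : ℝ, (t, s) ≠ (0, 0) →
      (p - 1) * (deriv (fun t' => F t' s) t * t + deriv (fun s' => F t s') s * s) <
        deriv (fun t' => deriv (fun t'' => F t'' s) t') t * t ^ 2 +
          deriv (fun s' => deriv (fun s'' => F t s'') s') s * s ^ 2) :
    StrictMonoOn (fun t =>
      t ^ (1 - p) * (deriv (fun t' => F t' (t * v)) (t * u) * u +
        deriv (fun s' => F (t * u) s') (t * v) * v) - t ^ (q - p) * c)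
      (Set.Ioi (0 : ℝ)) :=
  stmt_7_general p q hqp u v c hc huv F hF hFts hF4
end

section
/- Let p, q > 1 and let F : ℝ² → ℝ be twice continuously differentiable with F(0,0) = 0, satisfying F_{ts}(t,s)·t·s ≥ 0 and 0 < (max{p,q}-1)(F_t(t,s)·t + F_s(t,s)·s) < F_{tt}(t,s)·t² + F_{ss}(t,s)·s² for all (t,s) ≠ (0,0). Fix (u,v) ∈ ℝ² nonzero and A, B > 0, and define g(t) = (t^p/p)·A + (t^q/q)·B − F(tu, tv) for t > 0. If g'(1) = 0 (i.e., A + B = F_t(u,v)·u + F_s(u,v)·v with A, B playing the role of ‖u‖^p, ‖v‖^q), then g''(1) < 0. -/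
/-!
Along the ray `t ↦ t • (u, v)` the fibering map has
`g''(1) = (p - 1) A + (q - 1) B - D²F(u, v)[(u, v), (u, v)]`, and by symmetry of the Hessian
the last term is `F_tt u² + 2 F_ts u v + F_ss v²`. Bounding `p - 1` and `q - 1` by `max p q - 1`
and using the Nehari identity `A + B = F_t u + F_s v`, the first two terms are at most
`(max p q - 1) (F_t u + F_s v) < F_tt u² + F_ss v²`, while `F_ts u v ≥ 0`; hence `g''(1) < 0`.
-/

open Function

section Calculus

variable {E F : Type*} [NormedAddCommGroup E] [NormedSpace ℝ E]
  [NormedAddCommGroup F] [NormedSpace ℝ F]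

theorem hasDerivAt_fderiv_apply_comp {f : E → F} {c : ℝ → E} {c' : E} {x : ℝ} (w : E)
    (hf : DifferentiableAt ℝ (fderiv ℝ f) (c x)) (hc : HasDerivAt c c' x) :
    HasDerivAt (fun t => fderiv ℝ f (c t) w) (fderiv ℝ (fderiv ℝ f) (c x) c' w) x :=
  (ContinuousLinearMap.apply ℝ F w).hasFDerivAt.comp_hasDerivAt x
    (hf.hasFDerivAt.comp_hasDerivAt x hc)

theorem hasDerivAt_rpow_div_self {p : ℝ} (hp : 1 ≤ p) (t : ℝ) :
    HasDerivAt (fun t : ℝ => t ^ p / p) (t ^ (p - 1)) t :=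
  ((Real.hasDerivAt_rpow_const (Or.inr hp)).div_const p).congr_deriv <| by
    field_simp [(zero_lt_one.trans_le hp).ne']

end Calculus

section Partials

variable {F : Type*} [NormedAddCommGroup F] [NormedSpace ℝ F] {f : ℝ → ℝ → F} {t s : ℝ}

theorem deriv_left_eq_fderiv_uncurry (hf : DifferentiableAt ℝ (uncurry f) (t, s)) :
    deriv (fun t' => f t' s) t = fderiv ℝ (uncurry f) (t, s) (1, 0) :=
  HasDerivAt.deriv (hf.hasFDerivAt.comp_hasDerivAt t
    ((hasDerivAt_id' t).prodMk (hasDerivAt_const t s)) :)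

theorem deriv_right_eq_fderiv_uncurry (hf : DifferentiableAt ℝ (uncurry f) (t, s)) :
    deriv (fun s' => f t s') s = fderiv ℝ (uncurry f) (t, s) (0, 1) :=
  HasDerivAt.deriv (hf.hasFDerivAt.comp_hasDerivAt s
    ((hasDerivAt_const s t).prodMk (hasDerivAt_id' s)) :)

theorem deriv_left_left_eq_fderiv_fderiv_uncurry (hf : Differentiable ℝ (uncurry f))
    (hf' : DifferentiableAt ℝ (fderiv ℝ (uncurry f)) (t, s)) :
    deriv (fun t' => deriv (fun t'' => f t'' s) t') t =
      fderiv ℝ (fderiv ℝ (uncurry f)) (t, s) (1, 0) (1, 0) := by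
  simp only [fun t' => deriv_left_eq_fderiv_uncurry (s := s) (hf (t', s))]
  exact (hasDerivAt_fderiv_apply_comp (c := fun t' => (t', s)) _ hf'
    ((hasDerivAt_id' t).prodMk (hasDerivAt_const t s))).deriv

theorem deriv_right_left_eq_fderiv_fderiv_uncurry (hf : Differentiable ℝ (uncurry f))
    (hf' : DifferentiableAt ℝ (fderiv ℝ (uncurry f)) (t, s)) :
    deriv (fun s' => deriv (fun t' => f t' s') t) s =
      fderiv ℝ (fderiv ℝ (uncurry f)) (t, s) (0, 1) (1, 0) := by
  simp only [fun s' => deriv_left_eq_fderiv_uncurry (t := t) (hf (t, s'))]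
  exact (hasDerivAt_fderiv_apply_comp (c := fun s' => (t, s')) _ hf'
    ((hasDerivAt_const s t).prodMk (hasDerivAt_id' s))).deriv

theorem deriv_right_right_eq_fderiv_fderiv_uncurry (hf : Differentiable ℝ (uncurry f))
    (hf' : DifferentiableAt ℝ (fderiv ℝ (uncurry f)) (t, s)) :
    deriv (fun s' => deriv (fun s'' => f t s'') s') s =
      fderiv ℝ (fderiv ℝ (uncurry f)) (t, s) (0, 1) (0, 1) := by
  simp only [fun s' => deriv_right_eq_fderiv_uncurry (t := t) (hf (t, s'))]
  exact (hasDerivAt_fderiv_apply_comp (c := fun s' => (t, s')) _ hf'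
    ((hasDerivAt_const s t).prodMk (hasDerivAt_id' s))).deriv

end Partials

theorem ContinuousLinearMap.apply_prod_apply_prod (H : ℝ × ℝ →L[ℝ] ℝ × ℝ →L[ℝ] ℝ) (u v : ℝ) :
    H (u, v) (u, v) = H (1, 0) (1, 0) * u ^ 2 + (H (1, 0) (0, 1) + H (0, 1) (1, 0)) * u * v +
      H (0, 1) (0, 1) * v ^ 2 := by
  have huv : ((u, v) : ℝ × ℝ) = u • ((1, 0) : ℝ × ℝ) + v • ((0, 1) : ℝ × ℝ) := by simp
  rw [huv]
  simp only [map_add, map_smul, add_apply, smul_apply, smul_eq_mul]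
  ring

section Fibering

variable {E : Type*} [NormedAddCommGroup E] [NormedSpace ℝ E]

/-- The fibering map `t ↦ J(t x)`; in the paper `A = ‖u‖^p` and `B = ‖v‖^q`. -/
noncomputable def fiberingMap (p q A B : ℝ) (f : E → ℝ) (x : E) (t : ℝ) : ℝ :=
  t ^ p / p * A + t ^ q / q * B - f (t • x)

variable {p q : ℝ} (A B : ℝ) {f : E → ℝ} (x : E)

theorem hasDerivAt_smul_const_self (t : ℝ) : HasDerivAt (fun t : ℝ => t • x) x t := by
  simpa using (hasDerivAt_id' t).smul_const x

theorem deriv_fiberingMap (hp : 1 ≤ p) (hq : 1 ≤ q) (hf : Differentiable ℝ f) :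
    deriv (fiberingMap p q A B f x) =
      fun t => t ^ (p - 1) * A + t ^ (q - 1) * B - fderiv ℝ f (t • x) x := by
  funext t
  exact ((((hasDerivAt_rpow_div_self hp t).mul_const A).add
    ((hasDerivAt_rpow_div_self hq t).mul_const B)).sub
    ((hf _).hasFDerivAt.comp_hasDerivAt t (hasDerivAt_smul_const_self x t))).deriv

theorem deriv_deriv_fiberingMap_one (hp : 1 ≤ p) (hq : 1 ≤ q) (hf : ContDiff ℝ 2 f) :
    deriv (deriv (fiberingMap p q A B f x)) 1 =
      (p - 1) * A + (q - 1) * B - fderiv ℝ (fderiv ℝ f) x x x := by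
  have hf' : Differentiable ℝ (fderiv ℝ f) :=
    (hf.fderiv_right le_rfl).differentiable one_ne_zero
  rw [deriv_fiberingMap A B x hp hq (hf.differentiable two_ne_zero)]
  have hpow (r C : ℝ) : HasDerivAt (fun t : ℝ => t ^ (r - 1) * C) ((r - 1) * C) 1 := by
    simpa using (Real.hasDerivAt_rpow_const (p := r - 1) (Or.inl one_ne_zero)).mul_const C
  have hray := hasDerivAt_fderiv_apply_comp x (hf' _) (hasDerivAt_smul_const_self x 1)
  rw [one_smul] at hray
  exact (((hpow p A).add (hpow q B)).sub hray).deriv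

end Fibering

theorem stmt_16_general (p q : ℝ) (hp : 1 < p) (hq : 1 < q) (F : ℝ → ℝ → ℝ)
    (hF : ContDiff ℝ 2 (Function.uncurry F))
    (hFts : ∀ t s : ℝ,
      deriv (fun s' => deriv (fun t' => F t' s') t) s * t * s ≥ 0)
    (hF4 : ∀ t s : ℝ, (t, s) ≠ (0, 0) →
      0 < (max p q - 1) *
          (deriv (fun t' => F t' s) t * t + deriv (fun s' => F t s') s * s) ∧
        (max p q - 1) *
            (deriv (fun t' => F t' s) t * t + deriv (fun s' => F t s') s * s) <
          deriv (fun t' => deriv (fun t'' => F t'' s) t') t * t ^ 2 +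
            deriv (fun s' => deriv (fun s'' => F t s'') s') s * s ^ 2)
    (u v A B : ℝ) (huv : (u, v) ≠ (0, 0)) (hA : 0 < A) (hB : 0 < B)
    (hNehari : A + B = deriv (fun t' => F t' v) u * u + deriv (fun s' => F u s') v * v) :
    deriv (deriv (fun t : ℝ => t ^ p / p * A + t ^ q / q * B - F (t * u) (t * v))) 1 < 0 := by
  have hFd : Differentiable ℝ (uncurry F) := hF.differentiable two_ne_zero
  have hF'd : DifferentiableAt ℝ (fderiv ℝ (uncurry F)) (u, v) :=
    ((hF.fderiv_right le_rfl).differentiable one_ne_zero) _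
  have hsymm := hF.contDiffAt.isSymmSndFDerivAt (x := (u, v)) (by simp)
  change deriv (deriv (fiberingMap p q A B (uncurry F) (u, v))) 1 < 0
  rw [deriv_deriv_fiberingMap_one A B _ hp.le hq.le hF,
    ContinuousLinearMap.apply_prod_apply_prod, hsymm.eq (1, 0) (0, 1)]
  have hsecond := (hF4 u v huv).2
  have hmixed := hFts u v
  rw [deriv_left_left_eq_fderiv_fderiv_uncurry hFd hF'd,
    deriv_right_right_eq_fderiv_fderiv_uncurry hFd hF'd, ← hNehari] at hsecond
  rw [deriv_right_left_eq_fderiv_fderiv_uncurry hFd hF'd] at hmixed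
  have hpA : (p - 1) * A ≤ (max p q - 1) * A :=
    mul_le_mul_of_nonneg_right (by linarith [le_max_left p q]) hA.le
  have hqB : (q - 1) * B ≤ (max p q - 1) * B :=
    mul_le_mul_of_nonneg_right (by linarith [le_max_right p q]) hB.le
  linarith

theorem stmt_16 (p q : ℝ) (hp : 1 < p) (hq : 1 < q) (F : ℝ → ℝ → ℝ)
    (hF : ContDiff ℝ 2 (Function.uncurry F)) (hF0 : F 0 0 = 0)
    (hFts : ∀ t s : ℝ,
      deriv (fun s' => deriv (fun t' => F t' s') t) s * t * s ≥ 0)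
    (hF4 : ∀ t s : ℝ, (t, s) ≠ (0, 0) →
      0 < (max p q - 1) *
          (deriv (fun t' => F t' s) t * t + deriv (fun s' => F t s') s * s) ∧
        (max p q - 1) *
            (deriv (fun t' => F t' s) t * t + deriv (fun s' => F t s') s * s) <
          deriv (fun t' => deriv (fun t'' => F t'' s) t') t * t ^ 2 +
            deriv (fun s' => deriv (fun s'' => F t s'') s') s * s ^ 2)
    (u v A B : ℝ) (huv : (u, v) ≠ (0, 0)) (hA : 0 < A) (hB : 0 < B)
    (hNehari : A + B = deriv (fun t' => F t' v) u * u + deriv (fun s' => F u s') v * v) :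
    deriv (deriv (fun t : ℝ => t ^ p / p * A + t ^ q / q * B - F (t * u) (t * v))) 1 < 0 :=
  stmt_16_general p q hp hq F hF hFts hF4 u v A B huv hA hB hNehari
end

section
/- Let p > 1, θ ∈ [1, p), and let V be a countable set with measure μ : V → (0,∞) bounded below by μ_min > 0, a : V → [0,∞) with K := ∑_{x∈V} μ(x)(a(x)+1)^{-1/(p-1)} < ∞, and λ ≥ 1. Then for any ψ : V → ℝ with N := (∑_{x∈V} μ(x)(λa(x)+1)|ψ(x)|^p)^{1/p} < ∞ (noting this dominates both sup-norm and weighted terms), one has (∑_{x∈V} μ(x)|ψ(x)|^θ)^{1/θ} ≤ (1/μ_min)^{(θ-1)/(pθ)} · K^{(p-1)/(pθ)} · N. -/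
/-!
Pointwise, `μ x |ψ x|^p ≤ μ x (λ a x + 1) |ψ x|^p ≤ N^p` with `μ x ≥ μmin` gives the sup bound
`|ψ| ≤ (1/μmin)^(1/p) N`. Writing `μ|ψ| = (μ b^(-1/(p-1)))^((p-1)/p) · (μ b |ψ|^p)^(1/p)` with
`b = λ a + 1`, Hölder with exponents `p/(p-1)` and `p` bounds `∑ μ|ψ|` by `K^((p-1)/p) N`.
Finally `|ψ|^θ ≤ ‖ψ‖_∞^(θ-1) |ψ|` interpolates between the two.
-/

open Real

section

variable {V : Type*}

theorem abs_le_rpow_tsum_of_le_weight {ν ψ : V → ℝ} {c p : ℝ} (hc : 0 < c) (hν : ∀ x, c ≤ ν x)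
    (hp : 0 < p) (hs : Summable fun x => ν x * |ψ x| ^ p) (x : V) :
    |ψ x| ≤ (1 / c) ^ (1 / p) * (∑' y, ν y * |ψ y| ^ p) ^ (1 / p) := by
  have hterm : ∀ y, 0 ≤ ν y * |ψ y| ^ p := fun y =>
    mul_nonneg (hc.le.trans (hν y)) (rpow_nonneg (abs_nonneg _) _)
  have hpow : |ψ x| ^ p ≤ 1 / c * ∑' y, ν y * |ψ y| ^ p := by
    rw [one_div, inv_mul_eq_div, le_div_iff₀ hc, mul_comm]
    calc c * |ψ x| ^ p ≤ ν x * |ψ x| ^ p :=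
          mul_le_mul_of_nonneg_right (hν x) (rpow_nonneg (abs_nonneg _) _)
      _ ≤ ∑' y, ν y * |ψ y| ^ p := hs.le_tsum x fun y _ => hterm y
  calc |ψ x| = (|ψ x| ^ p) ^ (1 / p) := by rw [one_div, rpow_rpow_inv (abs_nonneg _) hp.ne']
    _ ≤ (1 / c * ∑' y, ν y * |ψ y| ^ p) ^ (1 / p) := by gcongr
    _ = (1 / c) ^ (1 / p) * (∑' y, ν y * |ψ y| ^ p) ^ (1 / p) :=
      mul_rpow (by positivity) (tsum_nonneg hterm)

theorem mul_rpow_neg_rpow_mul_mul_rpow_eq {m b t p : ℝ} (hm : 0 < m) (hb : 0 < b) (hp : 1 < p) :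
    (m * b ^ (-(1 / (p - 1)))) ^ ((p - 1) / p) * (m * b * |t| ^ p) ^ (1 / p) = m * |t| := by
  have hp0 : p ≠ 0 := by positivity
  have hp1 : p - 1 ≠ 0 := by linarith
  rw [mul_rpow hm.le (rpow_nonneg hb.le _), mul_rpow (by positivity) (by positivity),
    mul_rpow hm.le hb.le, ← rpow_mul hb.le, ← rpow_mul (abs_nonneg _), one_div p,
    mul_inv_cancel₀ hp0, rpow_one]
  have hb_exp : -(1 / (p - 1)) * ((p - 1) / p) = -p⁻¹ := by field_simp
  have hm_exp : (p - 1) / p + p⁻¹ = 1 := by field_simp; ring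
  calc m ^ ((p - 1) / p) * b ^ (-(1 / (p - 1)) * ((p - 1) / p)) * (m ^ p⁻¹ * b ^ p⁻¹ * |t|)
      = m ^ ((p - 1) / p + p⁻¹) * (b ^ (-p⁻¹) * b ^ p⁻¹) * |t| := by
        rw [rpow_add hm, hb_exp]; ring
    _ = m * |t| := by rw [← rpow_add hb, hm_exp, neg_add_cancel, rpow_one, rpow_zero, mul_one]

theorem summable_and_tsum_mul_abs_le {μ b ψ : V → ℝ} {p : ℝ} (hp : 1 < p) (hμ : ∀ x, 0 < μ x)
    (hb : ∀ x, 0 < b x) (hbs : Summable fun x => μ x * b x ^ (-(1 / (p - 1))))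
    (hψ : Summable fun x => μ x * b x * |ψ x| ^ p) :
    (Summable fun x => μ x * |ψ x|) ∧
      ∑' x, μ x * |ψ x| ≤
        (∑' x, μ x * b x ^ (-(1 / (p - 1)))) ^ ((p - 1) / p) *
          (∑' x, μ x * b x * |ψ x| ^ p) ^ (1 / p) := by
  have hpq : (p / (p - 1)).HolderConjugate p := (HolderConjugate.conjExponent hp).symm
  have hF : ∀ x, 0 ≤ μ x * b x ^ (-(1 / (p - 1))) := fun x =>
    mul_nonneg (hμ x).le (rpow_nonneg (hb x).le _)
  have hG : ∀ x, 0 ≤ μ x * b x * |ψ x| ^ p := fun x =>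
    mul_nonneg (mul_nonneg (hμ x).le (hb x).le) (rpow_nonneg (abs_nonneg _) _)
  have hf : ∀ x, ((μ x * b x ^ (-(1 / (p - 1)))) ^ ((p - 1) / p)) ^ (p / (p - 1)) =
      μ x * b x ^ (-(1 / (p - 1))) := fun x => by
    rw [← inv_div p (p - 1), rpow_inv_rpow (hF x) hpq.ne_zero]
  have hg : ∀ x, ((μ x * b x * |ψ x| ^ p) ^ (1 / p)) ^ p = μ x * b x * |ψ x| ^ p := fun x => by
    rw [one_div, rpow_inv_rpow (hG x) hpq.symm.ne_zero]
  have key := summable_and_inner_le_Lp_mul_Lq_tsum_of_nonneg hpq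
    (f := fun x => (μ x * b x ^ (-(1 / (p - 1)))) ^ ((p - 1) / p))
    (g := fun x => (μ x * b x * |ψ x| ^ p) ^ (1 / p))
    (fun x => rpow_nonneg (hF x) _) (fun x => rpow_nonneg (hG x) _)
    (by simpa only [hf] using hbs) (by simpa only [hg] using hψ)
  simpa only [hf, hg, one_div_div, mul_rpow_neg_rpow_mul_mul_rpow_eq (hμ _) (hb _) hp] using key

theorem summable_and_tsum_mul_rpow_neg_le {μ b b' : V → ℝ} {r : ℝ} (hμ : ∀ x, 0 ≤ μ x)
    (hb : ∀ x, 0 < b x) (hbb' : ∀ x, b x ≤ b' x) (hr : 0 ≤ r)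
    (hs : Summable fun x => μ x * b x ^ (-r)) :
    (Summable fun x => μ x * b' x ^ (-r)) ∧
      ∑' x, μ x * b' x ^ (-r) ≤ ∑' x, μ x * b x ^ (-r) := by
  have hle : ∀ x, μ x * b' x ^ (-r) ≤ μ x * b x ^ (-r) := fun x =>
    mul_le_mul_of_nonneg_left (rpow_le_rpow_of_nonpos (hb x) (hbb' x) (neg_nonpos.2 hr)) (hμ x)
  have hs' : Summable fun x => μ x * b' x ^ (-r) :=
    hs.of_nonneg_of_le (fun x => mul_nonneg (hμ x) (rpow_nonneg ((hb x).trans_le (hbb' x)).le _))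
      hle
  exact ⟨hs', hs'.tsum_le_tsum hle hs⟩

theorem tsum_mul_rpow_le_of_abs_le {μ ψ : V → ℝ} {M θ : ℝ} (hμ : ∀ x, 0 ≤ μ x)
    (hM : ∀ x, |ψ x| ≤ M) (hθ : 1 ≤ θ) (hs : Summable fun x => μ x * |ψ x|) :
    ∑' x, μ x * |ψ x| ^ θ ≤ M ^ (θ - 1) * ∑' x, μ x * |ψ x| := by
  have hle : ∀ x, μ x * |ψ x| ^ θ ≤ M ^ (θ - 1) * (μ x * |ψ x|) := fun x => by
    have hsplit : |ψ x| ^ θ = |ψ x| ^ (θ - 1) * |ψ x| := by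
      conv_lhs => rw [← sub_add_cancel θ 1]
      rw [rpow_add' (abs_nonneg _) (by linarith), rpow_one]
    calc μ x * |ψ x| ^ θ = |ψ x| ^ (θ - 1) * (μ x * |ψ x|) := by rw [hsplit]; ring
      _ ≤ M ^ (θ - 1) * (μ x * |ψ x|) := by
        gcongr
        · exact mul_nonneg (hμ x) (abs_nonneg _)
        · exact hM x
  have hsθ : Summable fun x => μ x * |ψ x| ^ θ :=
    (hs.mul_left _).of_nonneg_of_le (fun x => mul_nonneg (hμ x) (rpow_nonneg (abs_nonneg _) _)) hle
  rw [← tsum_mul_left]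
  exact hsθ.tsum_le_tsum hle (hs.mul_left _)

theorem sup_rpow_mul_holder_bound_rpow_eq {c K N p θ : ℝ} (hc : 0 ≤ c) (hK : 0 ≤ K) (hN : 0 ≤ N)
    (hθ : 0 < θ) :
    ((c ^ (1 / p) * N) ^ (θ - 1) * (K ^ ((p - 1) / p) * N)) ^ (1 / θ) =
      c ^ ((θ - 1) / (p * θ)) * K ^ ((p - 1) / (p * θ)) * N := by
  have hNθ : N ^ (θ - 1) * N = N ^ θ := by
    conv_rhs => rw [← sub_add_cancel θ 1]
    rw [rpow_add' hN (by linarith), rpow_one]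
  have hinner : (c ^ (1 / p) * N) ^ (θ - 1) * (K ^ ((p - 1) / p) * N) =
      c ^ ((θ - 1) / p) * K ^ ((p - 1) / p) * N ^ θ := by
    rw [mul_rpow (rpow_nonneg hc _) hN, ← rpow_mul hc, ← hNθ, one_div_mul_eq_div]
    ring
  rw [hinner, mul_rpow (by positivity) (by positivity), mul_rpow (by positivity) (by positivity),
    ← rpow_mul hc, ← rpow_mul hK, ← rpow_mul hN, div_mul_div_comm, div_mul_div_comm, mul_one,
    mul_one, mul_one_div_cancel hθ.ne', rpow_one]

end

theorem stmt_19_general (V : Type*) (μ : V → ℝ) (μmin : ℝ) (hμmin : 0 < μmin)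
    (hμ : ∀ x, μmin ≤ μ x) (p θ lam : ℝ) (hp : 1 < p) (hθ1 : 1 ≤ θ)
    (hlam : 1 ≤ lam) (a : V → ℝ) (ha : ∀ x, 0 ≤ a x) (K N : ℝ)
    (hKsum : Summable (fun x => μ x * (a x + 1) ^ (-(1 / (p - 1)))))
    (hK : K = ∑' x, μ x * (a x + 1) ^ (-(1 / (p - 1))))
    (ψ : V → ℝ)
    (hψ : Summable (fun x => μ x * (lam * a x + 1) * |ψ x| ^ p))
    (hN : N = (∑' x, μ x * (lam * a x + 1) * |ψ x| ^ p) ^ (1 / p)) :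
    (∑' x, μ x * |ψ x| ^ θ) ^ (1 / θ) ≤
      (1 / μmin) ^ ((θ - 1) / (p * θ)) * K ^ ((p - 1) / (p * θ)) * N := by
  have hμpos : ∀ x, 0 < μ x := fun x => hμmin.trans_le (hμ x)
  have hw : ∀ x, a x + 1 ≤ lam * a x + 1 := fun x => by nlinarith [ha x]
  have hw1 : ∀ x, 1 ≤ lam * a x + 1 := fun x => by linarith [hw x, ha x]
  have hsup : ∀ x, |ψ x| ≤ (1 / μmin) ^ (1 / p) * N := hN ▸
    abs_le_rpow_tsum_of_le_weight hμmin (fun x => by nlinarith [hμ x, hw1 x, hμpos x])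
      (by linarith) hψ
  obtain ⟨hws, hKw⟩ := summable_and_tsum_mul_rpow_neg_le (fun x => (hμpos x).le)
    (fun x => by linarith [ha x]) hw (one_div_nonneg.2 (by linarith)) hKsum
  rw [← hK] at hKw
  obtain ⟨hs1, hHolder⟩ := summable_and_tsum_mul_abs_le hp hμpos
    (fun x => zero_lt_one.trans_le (hw1 x)) hws hψ
  rw [← hN] at hHolder
  have hws0 : 0 ≤ ∑' x, μ x * (lam * a x + 1) ^ (-(1 / (p - 1))) :=
    tsum_nonneg fun x => mul_nonneg (hμpos x).le (rpow_nonneg (by linarith [hw1 x]) _)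
  have hN0 : 0 ≤ N := hN ▸ rpow_nonneg (tsum_nonneg fun x =>
    mul_nonneg (mul_nonneg (hμpos x).le (by linarith [hw1 x])) (rpow_nonneg (abs_nonneg _) _)) _
  have hL1 : ∑' x, μ x * |ψ x| ≤ K ^ ((p - 1) / p) * N :=
    hHolder.trans (mul_le_mul_of_nonneg_right
      (rpow_le_rpow hws0 hKw (div_nonneg (by linarith) (by linarith))) hN0)
  calc (∑' x, μ x * |ψ x| ^ θ) ^ (1 / θ)
      ≤ (((1 / μmin) ^ (1 / p) * N) ^ (θ - 1) * (K ^ ((p - 1) / p) * N)) ^ (1 / θ) := by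
        gcongr
        · exact tsum_nonneg fun x => mul_nonneg (hμpos x).le (rpow_nonneg (abs_nonneg _) _)
        · exact (tsum_mul_rpow_le_of_abs_le (fun x => (hμpos x).le) hsup hθ1 hs1).trans
            (by gcongr)
    _ = _ := sup_rpow_mul_holder_bound_rpow_eq (by positivity) (hws0.trans hKw) hN0 (by linarith)

theorem stmt_19 (V : Type*) [Countable V] (μ : V → ℝ) (μmin : ℝ) (hμmin : 0 < μmin)
    (hμ : ∀ x, μmin ≤ μ x) (p θ lam : ℝ) (hp : 1 < p) (hθ1 : 1 ≤ θ) (hθp : θ < p)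
    (hlam : 1 ≤ lam) (a : V → ℝ) (ha : ∀ x, 0 ≤ a x) (K N : ℝ)
    (hKsum : Summable (fun x => μ x * (a x + 1) ^ (-(1 / (p - 1)))))
    (hK : K = ∑' x, μ x * (a x + 1) ^ (-(1 / (p - 1))))
    (ψ : V → ℝ)
    (hψ : Summable (fun x => μ x * (lam * a x + 1) * |ψ x| ^ p))
    (hN : N = (∑' x, μ x * (lam * a x + 1) * |ψ x| ^ p) ^ (1 / p)) :
    (∑' x, μ x * |ψ x| ^ θ) ^ (1 / θ) ≤
      (1 / μmin) ^ ((θ - 1) / (p * θ)) * K ^ ((p - 1) / (p * θ)) * N :=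
  stmt_19_general V μ μmin hμmin hμ p θ lam hp hθ1 hlam a ha K N hKsum hK ψ hψ hN
end
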